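/- Let (A_i, B_i), i = 1, …, N, be matrix pairs and define the subspace Ω̄ = Σ over k = 1,…,N and over exponent tuples j_k,…,j_N ∈ {0,…,n−1} of A_N^{j_N} A_{N-1}^{j_{N-1}} ⋯ A_k^{j_k} (range B_k). Then for all h_1, …, h_N ∈ ℝ, the reachable subspace Ω_{h} = ⟨A_N|B_N⟩ + Σ_{j=2}^{N} (e^{A_N h_N} ⋯ e^{A_j h_j}) ⟨A_{j-1}|B_{j-1}⟩ is contained in Ω̄. -/

import Mathlib

open MeasureTheory

/-- The controllable subspace `⟨A|B⟩ = Σ_{i=0}^{n-1} A^i (range B)`. -/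
def ctrlSub {n m : ℕ} (A : Matrix (Fin n) (Fin n) ℝ) (B : Matrix (Fin n) (Fin m) ℝ) :
    Submodule ℝ (Fin n → ℝ) :=
  ⨆ i : Fin n, Submodule.map ((A ^ (i : ℕ)).mulVecLin) (LinearMap.range B.mulVecLin)

/-- `Γ_A V = Σ_{i=0}^{n-1} A^i V`. -/
def gammaSub {n : ℕ} (A : Matrix (Fin n) (Fin n) ℝ) (V : Submodule ℝ (Fin n → ℝ)) :
    Submodule ℝ (Fin n → ℝ) :=
  ⨆ i : Fin n, Submodule.map ((A ^ (i : ℕ)).mulVecLin) V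

/-- Descending ordered product `E (b-1) * E (b-2) * ⋯ * E a` (equals `1` if `b ≤ a`). -/
def descProd {n : ℕ} (E : ℕ → Matrix (Fin n) (Fin n) ℝ) (a : ℕ) : ℕ → Matrix (Fin n) (Fin n) ℝ
  | 0 => 1
  | b + 1 => if a ≤ b then E b * descProd E a b else 1

/-- Ascending ordered product `F 0 * F 1 * ⋯ * F (b-1)`. -/
def ascProd {n : ℕ} (F : ℕ → Matrix (Fin n) (Fin n) ℝ) : ℕ → Matrix (Fin n) (Fin n) ℝ
  | 0 => 1
  | b + 1 => ascProd F b * F b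

/-- `Ω̄`: the sum, over `k = 0, …, N-1` and all exponent tuples with entries `< n`, of
`A_{N-1}^{j_{N-1}} ⋯ A_k^{j_k} (range B_k)` (subsystems indexed from `0`). -/
def omegaBar {n : ℕ} (N : ℕ) (m : ℕ → ℕ) (A : ℕ → Matrix (Fin n) (Fin n) ℝ)
    (B : ∀ i, Matrix (Fin n) (Fin (m i)) ℝ) : Submodule ℝ (Fin n → ℝ) :=
  ⨆ k ∈ Finset.range N, ⨆ j : {f : ℕ → ℕ // ∀ i, f i < n},
    Submodule.map (descProd (fun i => A i ^ j.1 i) k N).mulVecLin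
      (LinearMap.range (B k).mulVecLin)

/-!
Each factor `exp (h l • A l)` lies in the subalgebra generated by `A l`: that subalgebra is
finite-dimensional, hence closed, so it contains the limit of the exponential series. By
Cayley–Hamilton the subalgebra is spanned by `A l ^ p`, `p < n`. Expanding, every product
`exp (h (N-1) • A (N-1)) * ⋯ * exp (h (k+1) • A (k+1)) * A k ^ i` is a linear combination of
monomials `A (N-1) ^ j (N-1) * ⋯ * A k ^ j k` with all exponents `< n`, and these monomials
map `range (B k)` into `omegaBar`.
-/

theorem Subalgebra.exp_mem_of_finiteDimensional {𝔸 : Type*} [Ring 𝔸] [Algebra ℝ 𝔸]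
    [TopologicalSpace 𝔸] [IsTopologicalRing 𝔸] [T2Space 𝔸] [ContinuousSMul ℝ 𝔸]
    [FiniteDimensional ℝ 𝔸] (S : Subalgebra ℝ 𝔸) {x : 𝔸} (hx : x ∈ S) :
    NormedSpace.exp x ∈ S := by
  -- `NormedSpace.exp_mem` asks for a `ℚ`-algebra structure compatible with the `ℝ`-one.
  let _ : Algebra ℚ 𝔸 := Algebra.compHom 𝔸 (algebraMap ℚ ℝ)
  have _ : IsScalarTower ℚ ℝ 𝔸 := IsScalarTower.of_algebraMap_eq fun _ => rfl
  exact NormedSpace.exp_mem (s := S) (Subalgebra.toSubmodule S).closed_of_finiteDimensional hx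

theorem Matrix.adjoin_eq_span_pow {R m : Type*} [CommRing R] [Nontrivial R] [Fintype m]
    [DecidableEq m] (M : Matrix m m R) :
    Subalgebra.toSubmodule (Algebra.adjoin R {M}) =
      Submodule.span R ((M ^ ·) '' Set.Iio (Fintype.card m)) := by
  classical
  rw [← Submodule.span_range_natDegree_eq_adjoin M.charpoly_monic M.aeval_self_charpoly,
    M.charpoly_natDegree_eq_dim]
  simp only [Finset.coe_image, Finset.coe_range]

theorem Matrix.map_mulVecLin_le_iSup_of_mem_span {R m n ι : Type*} [CommSemiring R] [Fintype n]
    {g : ι → Matrix m n R} {M : Matrix m n R} (hM : M ∈ Submodule.span R (Set.range g))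
    (V : Submodule R (n → R)) :
    V.map M.mulVecLin ≤ ⨆ i, V.map (g i).mulVecLin := by
  rintro _ ⟨v, hv, rfl⟩
  induction hM using Submodule.span_induction with
  | mem _ hg =>
    obtain ⟨i, rfl⟩ := hg
    exact Submodule.mem_iSup_of_mem i ⟨v, hv, rfl⟩
  | zero => simp
  | add _ _ _ _ hM hM' =>
    simpa [Matrix.add_mulVec] using add_mem hM hM'
  | smul c _ _ hM =>
    simpa [Matrix.smul_mulVec] using Submodule.smul_mem _ c hM

section descProd

variable {n : ℕ}

theorem descProd_self (E : ℕ → Matrix (Fin n) (Fin n) ℝ) (a : ℕ) : descProd E a a = 1 := by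
  cases a <;> simp [descProd]

theorem descProd_succ_of_le (E : ℕ → Matrix (Fin n) (Fin n) ℝ) {a b : ℕ} (h : a ≤ b) :
    descProd E a (b + 1) = E b * descProd E a b := by
  simp [descProd, h]

theorem descProd_congr {E F : ℕ → Matrix (Fin n) (Fin n) ℝ} {a b : ℕ}
    (h : ∀ i, i < b → E i = F i) : descProd E a b = descProd F a b := by
  induction b with
  | zero => rfl
  | succ b ih =>
    simp only [descProd, h b b.lt_succ_self, ih fun i hi => h i (hi.trans b.lt_succ_self)]

def descPowSpan (A : ℕ → Matrix (Fin n) (Fin n) ℝ) (k b : ℕ) :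
    Submodule ℝ (Matrix (Fin n) (Fin n) ℝ) :=
  Submodule.span ℝ
    (Set.range fun j : {f : ℕ → ℕ // ∀ i, f i < n} => descProd (fun i => A i ^ j.1 i) k b)

variable {A : ℕ → Matrix (Fin n) (Fin n) ℝ}

theorem adjoin_le_descPowSpan (k : ℕ) :
    Subalgebra.toSubmodule (Algebra.adjoin ℝ {A k}) ≤ descPowSpan A k (k + 1) := by
  rw [Matrix.adjoin_eq_span_pow, Fintype.card_fin]
  refine Submodule.span_mono ?_
  rintro _ ⟨p, hp, rfl⟩
  refine ⟨⟨fun _ => p, fun _ => hp⟩, ?_⟩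
  simp [descProd_succ_of_le _ le_rfl, descProd_self]

theorem adjoin_mul_descPowSpan_le {k b : ℕ} (hkb : k ≤ b) :
    Subalgebra.toSubmodule (Algebra.adjoin ℝ {A b}) * descPowSpan A k b ≤
      descPowSpan A k (b + 1) := by
  rw [Matrix.adjoin_eq_span_pow, Fintype.card_fin, descPowSpan, Submodule.span_mul_span]
  refine Submodule.span_mono (Set.mul_subset_iff.2 ?_)
  rintro _ ⟨p, hp, rfl⟩ _ ⟨j, rfl⟩
  have hj : ∀ i, Function.update j.1 b p i < n := fun i => by
    rcases eq_or_ne i b with rfl | hi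
    · simpa using hp
    · simpa [hi] using j.2 i
  refine ⟨⟨_, hj⟩, ?_⟩
  dsimp only
  rw [descProd_succ_of_le _ hkb, Function.update_self]
  congr 1
  exact descProd_congr fun i hi => by rw [Function.update_of_ne hi.ne]

theorem descProd_mul_mem_descPowSpan {E : ℕ → Matrix (Fin n) (Fin n) ℝ}
    (hE : ∀ l, E l ∈ Algebra.adjoin ℝ {A l}) {k b : ℕ} (hkb : k < b) {X : Matrix (Fin n) (Fin n) ℝ}
    (hX : X ∈ Algebra.adjoin ℝ {A k}) : descProd E (k + 1) b * X ∈ descPowSpan A k b := by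
  induction b, hkb using Nat.le_induction with
  | base => simpa [descProd_self] using adjoin_le_descPowSpan k hX
  | succ b hkb ih =>
    rw [descProd_succ_of_le _ hkb, mul_assoc]
    exact adjoin_mul_descPowSpan_le (Nat.le_of_succ_le hkb) (Submodule.mul_mem_mul (hE b) ih)

end descProd

section omegaBar

variable {n N : ℕ} {m : ℕ → ℕ} {A : ℕ → Matrix (Fin n) (Fin n) ℝ}
  (B : ∀ i, Matrix (Fin n) (Fin (m i)) ℝ)

theorem map_range_le_omegaBar {k : ℕ} (hk : k < N) {M : Matrix (Fin n) (Fin n) ℝ}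
    (hM : M ∈ descPowSpan A k N) :
    (LinearMap.range (B k).mulVecLin).map M.mulVecLin ≤ omegaBar N m A B :=
  (Matrix.map_mulVecLin_le_iSup_of_mem_span hM _).trans <| by
    rw [omegaBar]
    exact le_iSup₂_of_le k (Finset.mem_range.2 hk) le_rfl

theorem map_ctrlSub_le_omegaBar {E : ℕ → Matrix (Fin n) (Fin n) ℝ}
    (hE : ∀ l, E l ∈ Algebra.adjoin ℝ {A l}) {k : ℕ} (hk : k < N) :
    (ctrlSub (A k) (B k)).map (descProd E (k + 1) N).mulVecLin ≤ omegaBar N m A B := by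
  rw [ctrlSub, Submodule.map_iSup]
  refine iSup_le fun i => ?_
  rw [← Submodule.map_comp, ← Matrix.mulVecLin_mul]
  exact map_range_le_omegaBar B hk <| descProd_mul_mem_descPowSpan hE hk <|
    pow_mem (Algebra.self_mem_adjoin_singleton ℝ _) _

end omegaBar

/-- For all durations `h`, the reachable subspace `Ω_{h}` is contained in `Ω̄`. -/
theorem reachable_le_omegaBar {n N : ℕ} (hN : 1 ≤ N) (m : ℕ → ℕ)
    (A : ℕ → Matrix (Fin n) (Fin n) ℝ) (B : ∀ i, Matrix (Fin n) (Fin (m i)) ℝ)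
    (h : ℕ → ℝ) :
    let E : ℕ → Matrix (Fin n) (Fin n) ℝ := fun i => NormedSpace.exp (h i • A i)
    let Ω : Submodule ℝ (Fin n → ℝ) := ctrlSub (A (N - 1)) (B (N - 1)) ⊔
      ⨆ j ∈ Finset.Ico 1 N, Submodule.map (descProd E j N).mulVecLin
        (ctrlSub (A (j - 1)) (B (j - 1)))
    Ω ≤ omegaBar N m A B := by
  intro E Ω
  have hE : ∀ l, E l ∈ Algebra.adjoin ℝ {A l} := fun l =>
    Subalgebra.exp_mem_of_finiteDimensional _ <|
      Subalgebra.smul_mem _ (Algebra.self_mem_adjoin_singleton ℝ _) _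
  refine sup_le ?_ (iSup₂_le fun j hj => ?_)
  · simpa [Nat.sub_add_cancel hN, descProd_self] using
      map_ctrlSub_le_omegaBar B hE (Nat.sub_lt hN Nat.one_pos)
  · obtain ⟨hj, hjN⟩ := Finset.mem_Ico.1 hj
    simpa [Nat.sub_add_cancel hj] using map_ctrlSub_le_omegaBar B hE (k := j - 1) (by omega)
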